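/- Fix a segment t ∈ {1,…,σ} of a uniform RIV model with segment probability p_t, a finite candidate set C_t ⊂ (t, t+1), an integer k ≥ 1, and set k_t = ⌊p_t k⌋; assume |C_t| ≥ k_t and let Ŵ_t be the greedy committee for segment t. Then for every c ∈ (C_t ∖ K_t) ∖ Ŵ_t and all integers 1 ≤ ℓ ≤ k and 0 ≤ j ≤ ℓ−1, it holds that π(ℓ, c, j) ≤ ℓ/k − 1/(4k). -/

import Mathlib

open MeasureTheory

/-- The distribution of the pair of endpoints `(X, Y)` of a random voter in the uniform
RIV model with `σ` segments and segment probabilities `p 1, …, p σ`: the mixture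
`∑ t, p t • (U_{[t,t+1]} ⊗ U_{[t,t+1]})` where `U_I` is the uniform measure on `I`. -/
noncomputable def rivMeasure (σ : ℕ) (p : ℕ → ℝ) : Measure (ℝ × ℝ) :=
  ∑ t ∈ Finset.Icc 1 σ,
    ENNReal.ofReal (p t) •
      ((volume.restrict (Set.Icc (t : ℝ) (t + 1))).prod
        (volume.restrict (Set.Icc (t : ℝ) (t + 1))))

/-- The `ξ`-th marked point of segment `t`: `t + (2ξ−1)/(2(k_t+2))`. -/
noncomputable def markedPoint (t kt : ℕ) (ξ : ℕ) : ℝ :=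
  (t : ℝ) + (2 * (ξ : ℝ) - 1) / (2 * ((kt : ℝ) + 2))

/-- `w 2, …, w (kt+1)` is a greedy committee for segment `t` with candidate set `Ct`:
for each `ξ = 2, …, kt+1`, `w ξ` is a candidate not chosen before that is closest to
the marked point `m_ξ` among all not-yet-chosen candidates. -/
def IsGreedyCommittee (t kt : ℕ) (Ct : Finset ℝ) (w : ℕ → ℝ) : Prop :=
  ∀ ξ ∈ Finset.Icc 2 (kt + 1),
    w ξ ∈ Ct ∧ w ξ ∉ (Finset.Icc 2 (ξ - 1)).image w ∧
      ∀ c' ∈ Ct, c' ∉ (Finset.Icc 2 (ξ - 1)).image w →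
        |w ξ - markedPoint t kt ξ| ≤ |c' - markedPoint t kt ξ|

/-- `rank W c = ρ(c)`: the number of points of `W` strictly to the left of `c`. -/
noncomputable def rank (W : Finset ℝ) (c : ℝ) : ℕ :=
  (W.filter (fun x => x < c)).card

/-- `dPlus t kt W c r = d⁺_r(c)`: the distance from `c` to the `(r+1)`-th element of `W`
to the right of `c` (elements of `W` listed in increasing order), or to the right
endpoint `t+1` of the segment if no such element exists. -/
noncomputable def dPlus (t kt : ℕ) (W : Finset ℝ) (c : ℝ) (r : ℕ) : ℝ :=
  if rank W c + r < kt then (W.sort (· ≤ ·)).getD (rank W c + r) 0 - c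
  else ((t : ℝ) + 1) - c

/-- `dMinus t W c r = d⁻_r(c)`: the distance from `c` to the `(r+1)`-th element of `W`
to the left of `c`, or to the left endpoint `t` of the segment if no such element exists. -/
noncomputable def dMinus (t : ℕ) (W : Finset ℝ) (c : ℝ) (r : ℕ) : ℝ :=
  if r + 1 ≤ rank W c then c - (W.sort (· ≤ ·)).getD (rank W c - r - 1) 0
  else c - (t : ℝ)

/-- The event that a voter with endpoint pair `xy` approves `c`, approves at most `r₁`
elements of `W` strictly to the left of `c`, and at most `r₂` elements of `W` strictly
to the right of `c` (the voter's approval interval is `[min xy, max xy]`). -/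
def approvalEvent (W : Finset ℝ) (c : ℝ) (r₁ r₂ : ℕ) : Set (ℝ × ℝ) :=
  {xy | (min xy.1 xy.2 ≤ c ∧ c ≤ max xy.1 xy.2) ∧
    (W.filter (fun x => x < c ∧ min xy.1 xy.2 ≤ x ∧ x ≤ max xy.1 xy.2)).card ≤ r₁ ∧
    (W.filter (fun x => c < x ∧ min xy.1 xy.2 ≤ x ∧ x ≤ max xy.1 xy.2)).card ≤ r₂}

/-- `segmentMiddle t kt Ct = K_t`: the candidates of `C_t` lying in
`(t + 3/(2(k_t+2)), t + 1 − 3/(2(k_t+2)))`. -/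
noncomputable def segmentMiddle (t kt : ℕ) (Ct : Finset ℝ) : Finset ℝ :=
  Ct.filter (fun x =>
    (t : ℝ) + 3 / (2 * ((kt : ℝ) + 2)) < x ∧ x < (t : ℝ) + 1 - 3 / (2 * ((kt : ℝ) + 2)))

/-!
Let `c` lie within `3/(2(k_t+2))` of the left end of segment `t`, so `c` is left of every
marked point. The greedy choice puts each winner `w_ξ` in `(c, 2m_ξ - c]`, so an interval
through `c` reaching `2m_{r+2} - c` (with `r = ℓ - 1 - j < k_t`) contains the `r + 1` winners
`w_2, …, w_{r+2}` to the right of `c`. The voters of the event therefore have their endpoints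
in `[t, c] × [c, 2m_{r+2} - c]` up to order, of mass `2 p_t (c - t)(2m_{r+2} - 2c)`, and since
`p_t k < k_t + 1` this is at most `(r + 3/4)/k ≤ ℓ/k - 1/(4k)`. If `r ≥ k_t`, the trivial
box bound `2 p_t (c - t)(t + 1 - c) ≤ p_t / 2` suffices. The right end is symmetric, with `j`
in place of `r`.
-/

open Finset

-- `q = p_t k`, `a` is the distance from `c` to the near end of its segment and `X` the reach
-- of an approving interval beyond `c` towards the far end.
theorem mul_two_mul_mul_le_of_edge {kt r : ℕ} {q a X : ℝ} (hq : q < kt + 1)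
    (ha0 : 0 ≤ a) (hX0 : 0 ≤ X) (haX : a + X ≤ 1) (ha : 2 * a * (kt + 2) ≤ 3)
    (hX : r < kt → (X + 2 * a) * (kt + 2) ≤ 2 * r + 3) :
    q * (2 * (a * X)) ≤ r + 3 / 4 := by
  have haX0 : 0 ≤ a * X := mul_nonneg ha0 hX0
  rcases lt_or_ge r kt with hr | hr
  · have hX := hX hr
    have hr : (r : ℝ) + 1 ≤ kt := by exact_mod_cast hr
    set K : ℝ := kt + 2
    have hK : 0 < K := by positivity
    -- `u = aK ≤ 3/2` and `v = XK ≤ 2r + 3 - 2u` give `uv ≤ 2ru + u(3 - 2u) ≤ 3r + 9/8`.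
    have huv : (a * K) * (X * K) ≤ 3 * r + 9 / 8 := by
      have hu0 : 0 ≤ a * K := mul_nonneg ha0 hK.le
      nlinarith [sq_nonneg (2 * (a * K) - 3 / 2), mul_le_mul_of_nonneg_left
        (by linarith : X * K ≤ 2 * r + 3 - 2 * (a * K)) hu0,
        mul_nonneg (Nat.cast_nonneg (α := ℝ) r) (by linarith : (0 : ℝ) ≤ 3 / 2 - a * K)]
    -- The difference is increasing in `K ≥ r + 3`, and at `K = r + 3` it equals
    -- `r(r - 1)² + 11/4 (r - 8/11)² + 9/4 - 16/11 > 0`.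
    have hpoly : 2 * (K - 1) * (3 * r + 9 / 8) ≤ (r + 3 / 4) * K ^ 2 := by
      have hr0 : (0 : ℝ) ≤ r := Nat.cast_nonneg r
      have hKr : 0 ≤ K - r - 3 := by linarith
      nlinarith [mul_nonneg hKr
          (by nlinarith : (0 : ℝ) ≤ (r + 3 / 4) * (K + r + 3) - (6 * r + 9 / 4)),
        mul_nonneg hr0 (sq_nonneg ((r : ℝ) - 1)), sq_nonneg ((r : ℝ) - 8 / 11)]
    calc q * (2 * (a * X)) ≤ (K - 1) * (2 * (a * X)) := by gcongr; linarith
      _ = 2 * (K - 1) * ((a * K) * (X * K)) / K ^ 2 := by field_simp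
      _ ≤ 2 * (K - 1) * (3 * r + 9 / 8) / K ^ 2 := by gcongr; linarith
      _ ≤ r + 3 / 4 := by rwa [div_le_iff₀ (by positivity)]
  · have hr : (kt : ℝ) ≤ r := by exact_mod_cast hr
    have : a * X ≤ 1 / 4 := by nlinarith [sq_nonneg (a - X)]
    nlinarith

theorem volume_le_of_forall_straddle {S : Set (ℝ × ℝ)} {L c R : ℝ} (hL : L ≤ c) (hR : c ≤ R)
    (hS : ∀ xy ∈ S, L ≤ min xy.1 xy.2 ∧ min xy.1 xy.2 ≤ c ∧ c ≤ max xy.1 xy.2 ∧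
      max xy.1 xy.2 ≤ R) :
    volume S ≤ ENNReal.ofReal (2 * ((c - L) * (R - c))) := by
  have hsub : S ⊆ Set.Icc L c ×ˢ Set.Icc c R ∪ Set.Icc c R ×ˢ Set.Icc L c := by
    rintro ⟨x, y⟩ hxy
    obtain ⟨hLm, hmc, hcM, hMR⟩ := hS _ hxy
    rcases le_total x y with h | h
    · simp only [min_eq_left h, max_eq_right h] at *
      exact Or.inl ⟨⟨hLm, hmc⟩, hcM, hMR⟩
    · simp only [min_eq_right h, max_eq_left h] at *
      exact Or.inr ⟨⟨hcM, hMR⟩, hLm, hmc⟩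
  calc volume S ≤ volume (Set.Icc L c ×ˢ Set.Icc c R) + volume (Set.Icc c R ×ˢ Set.Icc L c) :=
        (measure_mono hsub).trans (measure_union_le _ _)
    _ = ENNReal.ofReal (2 * ((c - L) * (R - c))) := by
      rw [Measure.volume_eq_prod, Measure.prod_prod, Measure.prod_prod, Real.volume_Icc,
        Real.volume_Icc, ← ENNReal.ofReal_mul (by linarith), ← ENNReal.ofReal_mul (by linarith),
        ← ENNReal.ofReal_add (by nlinarith) (by nlinarith)]
      ring_nf

theorem rivMeasure_le_volume_inter {σ t : ℕ} (p : ℕ → ℝ) {E : Set (ℝ × ℝ)} {c : ℝ}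
    (hc : c ∈ Set.Ioo (t : ℝ) (t + 1))
    (hE : ∀ xy ∈ E, min xy.1 xy.2 ≤ c ∧ c ≤ max xy.1 xy.2) :
    rivMeasure σ p E ≤
      ENNReal.ofReal (p t) * volume (E ∩ Set.Icc (t : ℝ) (t + 1) ×ˢ Set.Icc (t : ℝ) (t + 1)) := by
  set f : ℕ → ENNReal := fun s =>
    ENNReal.ofReal (p s) * volume (E ∩ Set.Icc (s : ℝ) (s + 1) ×ˢ Set.Icc (s : ℝ) (s + 1))
  -- Boxes of other segments lie entirely to one side of `c`, so they miss `E`.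
  have hoff : ∀ s ≠ t, f s = 0 := by
    intro s hst
    suffices E ∩ Set.Icc (s : ℝ) (s + 1) ×ˢ Set.Icc (s : ℝ) (s + 1) = ∅ by
      simp only [f, this, measure_empty, mul_zero]
    refine Set.eq_empty_of_forall_notMem fun xy ⟨hxy, hx, hy⟩ => ?_
    obtain ⟨hmin, hmax⟩ := hE xy hxy
    rcases hst.lt_or_gt with h | h
    · have : (s : ℝ) + 1 ≤ t := by exact_mod_cast h
      linarith [max_le hx.2 hy.2, hc.1]
    · have : (t : ℝ) + 1 ≤ s := by exact_mod_cast h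
      linarith [le_min hx.1 hy.1, hc.2]
  calc rivMeasure σ p E = ∑ s ∈ Finset.Icc 1 σ, f s := by
        simp only [rivMeasure, Measure.finsetSum_apply, Measure.smul_apply, smul_eq_mul, f,
          Measure.prod_restrict, Measure.restrict_apply' (measurableSet_Icc.prod measurableSet_Icc),
          Measure.volume_eq_prod]
    _ ≤ ∑ s ∈ insert t (Finset.Icc 1 σ), f s := Finset.sum_le_sum_of_subset (subset_insert _ _)
    _ = f t := Finset.sum_eq_single_of_mem t (mem_insert_self _ _) fun s _ => hoff s

theorem rivMeasure_le_of_forall_straddle {σ t : ℕ} (p : ℕ → ℝ) {E : Set (ℝ × ℝ)} {L c R : ℝ}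
    (hc : c ∈ Set.Ioo (t : ℝ) (t + 1)) (hL : L ≤ c) (hR : c ≤ R)
    (hE : ∀ xy ∈ E, min xy.1 xy.2 ≤ c ∧ c ≤ max xy.1 xy.2)
    (hLR : ∀ xy ∈ E, xy ∈ Set.Icc (t : ℝ) (t + 1) ×ˢ Set.Icc (t : ℝ) (t + 1) →
      L ≤ min xy.1 xy.2 ∧ max xy.1 xy.2 ≤ R) :
    rivMeasure σ p E ≤ ENNReal.ofReal (p t * (2 * ((c - L) * (R - c)))) := by
  refine (rivMeasure_le_volume_inter p hc hE).trans ?_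
  rw [ENNReal.ofReal_mul' (by nlinarith)]
  gcongr
  refine volume_le_of_forall_straddle hL hR fun xy ⟨hxy, hbox⟩ => ?_
  exact ⟨(hLR xy hxy hbox).1, hE xy hxy |>.1, hE xy hxy |>.2, (hLR xy hxy hbox).2⟩

theorem max_lt_of_mem_approvalEvent {W S : Finset ℝ} {c R : ℝ} {j r : ℕ} {xy : ℝ × ℝ}
    (hSW : S ⊆ W) (hS : ∀ x ∈ S, c < x ∧ x ≤ R) (hr : r < S.card)
    (hxy : xy ∈ approvalEvent W c j r) : max xy.1 xy.2 < R := by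
  obtain ⟨⟨hmin, -⟩, -, hright⟩ := hxy
  by_contra! hR
  have : S ⊆ W.filter (fun x => c < x ∧ min xy.1 xy.2 ≤ x ∧ x ≤ max xy.1 xy.2) := fun x hx =>
    mem_filter.2 ⟨hSW hx, (hS x hx).1, hmin.trans (hS x hx).1.le, (hS x hx).2.trans hR⟩
  exact (hr.trans_le (card_le_card this)).not_ge hright

theorem lt_min_of_mem_approvalEvent {W S : Finset ℝ} {c L : ℝ} {j r : ℕ} {xy : ℝ × ℝ}
    (hSW : S ⊆ W) (hS : ∀ x ∈ S, L ≤ x ∧ x < c) (hj : j < S.card)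
    (hxy : xy ∈ approvalEvent W c j r) : L < min xy.1 xy.2 := by
  obtain ⟨⟨-, hmax⟩, hleft, -⟩ := hxy
  by_contra! hL
  have : S ⊆ W.filter (fun x => x < c ∧ min xy.1 xy.2 ≤ x ∧ x ≤ max xy.1 xy.2) := fun x hx =>
    mem_filter.2 ⟨hSW hx, (hS x hx).2, hL.trans (hS x hx).1, (hS x hx).2.le.trans hmax⟩
  exact (hj.trans_le (card_le_card this)).not_ge hleft

theorem markedPoint_mono {t kt ξ ξ' : ℕ} (h : ξ ≤ ξ') :
    markedPoint t kt ξ ≤ markedPoint t kt ξ' := by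
  unfold markedPoint
  gcongr

theorem two_mul_markedPoint_sub_mul (t kt ξ : ℕ) :
    2 * (markedPoint t kt ξ - t) * (kt + 2) = 2 * ξ - 1 := by
  unfold markedPoint
  field_simp
  ring

theorem markedPoint_two (t kt : ℕ) : markedPoint t kt 2 = t + 3 / (2 * (kt + 2)) := by
  norm_num [markedPoint]

theorem markedPoint_add_one (t kt : ℕ) :
    markedPoint t kt (kt + 1) = t + 1 - 3 / (2 * (kt + 2)) := by
  unfold markedPoint
  field_simp
  push_cast
  ring

namespace IsGreedyCommittee

variable {t kt : ℕ} {Ct : Finset ℝ} {w : ℕ → ℝ} {c : ℝ}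

theorem injOn (hw : IsGreedyCommittee t kt Ct w) : Set.InjOn w (Finset.Icc 2 (kt + 1)) := by
  intro ξ hξ ξ' hξ' h
  wlog hlt : ξ < ξ' generalizing ξ ξ'
  · rcases (not_lt.1 hlt).lt_or_eq with hgt | heq
    · exact (this hξ' hξ h.symm hgt).symm
    · exact heq.symm
  rw [coe_Icc, Set.mem_Icc] at hξ hξ'
  exact absurd (mem_image.2 ⟨ξ, mem_Icc.2 ⟨hξ.1, by omega⟩, h⟩)
    (hw ξ' (mem_Icc.2 hξ')).2.1

theorem card_image_Icc (hw : IsGreedyCommittee t kt Ct w) {a b : ℕ} (ha : 2 ≤ a)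
    (hb : b ≤ kt + 1) : ((Finset.Icc a b).image w).card = b + 1 - a := by
  rw [card_image_of_injOn (hw.injOn.mono ?_), Nat.card_Icc]
  exact_mod_cast Icc_subset_Icc ha hb

theorem abs_sub_markedPoint_le (hw : IsGreedyCommittee t kt Ct w) (hc : c ∈ Ct)
    (hcW : c ∉ (Finset.Icc 2 (kt + 1)).image w) {ξ : ℕ} (hξ : ξ ∈ Finset.Icc 2 (kt + 1)) :
    |w ξ - markedPoint t kt ξ| ≤ |c - markedPoint t kt ξ| :=
  (hw ξ hξ).2.2 c hc fun h => hcW <| image_subset_image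
    (Icc_subset_Icc le_rfl (by have := (mem_Icc.1 hξ).2; omega)) h

theorem lt_and_le_of_le_markedPoint (hw : IsGreedyCommittee t kt Ct w) (hc : c ∈ Ct)
    (hcW : c ∉ (Finset.Icc 2 (kt + 1)).image w) {ξ : ℕ} (hξ : ξ ∈ Finset.Icc 2 (kt + 1))
    (hcm : c ≤ markedPoint t kt ξ) :
    c < w ξ ∧ w ξ ≤ 2 * markedPoint t kt ξ - c := by
  have h := hw.abs_sub_markedPoint_le hc hcW hξ
  rw [abs_of_nonpos (by linarith : c - markedPoint t kt ξ ≤ 0)] at h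
  have hne : w ξ ≠ c := fun h => hcW (h ▸ mem_image_of_mem w hξ)
  obtain ⟨h₁, h₂⟩ := abs_le.1 h
  exact ⟨lt_of_le_of_ne (by linarith) hne.symm, by linarith⟩

theorem le_and_lt_of_markedPoint_le (hw : IsGreedyCommittee t kt Ct w) (hc : c ∈ Ct)
    (hcW : c ∉ (Finset.Icc 2 (kt + 1)).image w) {ξ : ℕ} (hξ : ξ ∈ Finset.Icc 2 (kt + 1))
    (hcm : markedPoint t kt ξ ≤ c) :
    2 * markedPoint t kt ξ - c ≤ w ξ ∧ w ξ < c := by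
  have h := hw.abs_sub_markedPoint_le hc hcW hξ
  rw [abs_of_nonneg (by linarith : c - markedPoint t kt ξ ≥ 0)] at h
  have hne : w ξ ≠ c := fun h => hcW (h ▸ mem_image_of_mem w hξ)
  obtain ⟨h₁, h₂⟩ := abs_le.1 h
  exact ⟨by linarith, lt_of_le_of_ne (by linarith) hne⟩

theorem max_lt_of_mem_approvalEvent (hw : IsGreedyCommittee t kt Ct w) (hc : c ∈ Ct)
    (hcW : c ∉ (Finset.Icc 2 (kt + 1)).image w) (hcm : c ≤ markedPoint t kt 2) {j r : ℕ}
    (hr : r < kt) {xy : ℝ × ℝ}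
    (hxy : xy ∈ approvalEvent ((Finset.Icc 2 (kt + 1)).image w) c j r) :
    max xy.1 xy.2 < 2 * markedPoint t kt (r + 2) - c := by
  refine _root_.max_lt_of_mem_approvalEvent (S := (Finset.Icc 2 (r + 2)).image w)
    (image_subset_image (Icc_subset_Icc le_rfl (by omega))) ?_
    (by rw [hw.card_image_Icc le_rfl (by omega)]; omega) hxy
  simp only [mem_image, mem_Icc, forall_exists_index, and_imp]
  rintro _ ξ hξ2 hξr rfl
  have hξ : ξ ∈ Finset.Icc 2 (kt + 1) := mem_Icc.2 ⟨hξ2, by omega⟩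
  obtain ⟨hcw, hwm⟩ := hw.lt_and_le_of_le_markedPoint hc hcW hξ
    (hcm.trans (markedPoint_mono hξ2))
  exact ⟨hcw, hwm.trans (by linarith [markedPoint_mono (t := t) (kt := kt) hξr])⟩

theorem lt_min_of_mem_approvalEvent (hw : IsGreedyCommittee t kt Ct w) (hc : c ∈ Ct)
    (hcW : c ∉ (Finset.Icc 2 (kt + 1)).image w) (hcm : markedPoint t kt (kt + 1) ≤ c)
    {j r : ℕ} (hj : j < kt) {xy : ℝ × ℝ}
    (hxy : xy ∈ approvalEvent ((Finset.Icc 2 (kt + 1)).image w) c j r) :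
    2 * markedPoint t kt (kt + 1 - j) - c < min xy.1 xy.2 := by
  refine _root_.lt_min_of_mem_approvalEvent (S := (Finset.Icc (kt + 1 - j) (kt + 1)).image w)
    (image_subset_image (Icc_subset_Icc (by omega) le_rfl)) ?_
    (by rw [hw.card_image_Icc (by omega) le_rfl]; omega) hxy
  simp only [mem_image, mem_Icc, forall_exists_index, and_imp]
  rintro _ ξ hjξ hξk rfl
  have hξ : ξ ∈ Finset.Icc 2 (kt + 1) := mem_Icc.2 ⟨by omega, hξk⟩
  obtain ⟨hmw, hwc⟩ := hw.le_and_lt_of_markedPoint_le hc hcW hξ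
    ((markedPoint_mono hξk).trans hcm)
  exact ⟨le_trans (by linarith [markedPoint_mono (t := t) (kt := kt) hjξ]) hmw, hwc⟩

end IsGreedyCommittee

section Edge

variable {σ t kt k : ℕ} {p : ℕ → ℝ} {Ct : Finset ℝ} {w : ℕ → ℝ} {c : ℝ}

theorem rivMeasure_approvalEvent_le_of_le_markedPoint_two (hw : IsGreedyCommittee t kt Ct w)
    (hct : c ∈ Set.Ioo (t : ℝ) (t + 1)) (hc : c ∈ Ct)
    (hcW : c ∉ (Finset.Icc 2 (kt + 1)).image w) (hcm : c ≤ markedPoint t kt 2)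
    (hk : 0 < k) (hkt : kt = ⌊p t * k⌋₊) (j r : ℕ) :
    rivMeasure σ p (approvalEvent ((Finset.Icc 2 (kt + 1)).image w) c j r) ≤
      ENNReal.ofReal ((r + 3 / 4) / k) := by
  obtain ⟨R, hcR, hRt, hRm, hmax⟩ : ∃ R : ℝ, c ≤ R ∧ R ≤ t + 1 ∧
      (r < kt → R ≤ 2 * markedPoint t kt (r + 2) - c) ∧
      ∀ xy ∈ approvalEvent ((Finset.Icc 2 (kt + 1)).image w) c j r,
        xy ∈ Set.Icc (t : ℝ) (t + 1) ×ˢ Set.Icc (t : ℝ) (t + 1) → max xy.1 xy.2 ≤ R := by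
    rcases lt_or_ge r kt with hr | hr
    · have hm : c ≤ markedPoint t kt (r + 2) := hcm.trans (markedPoint_mono (by omega))
      exact ⟨min (t + 1) (2 * markedPoint t kt (r + 2) - c), le_min hct.2.le (by linarith),
        min_le_left _ _, fun _ => min_le_right _ _, fun xy hxy ⟨hx, hy⟩ =>
          le_min (max_le hx.2 hy.2) (hw.max_lt_of_mem_approvalEvent hc hcW hcm hr hxy).le⟩
    · exact ⟨t + 1, hct.2.le, le_rfl, fun h => absurd h hr.not_gt,
        fun xy _ ⟨hx, hy⟩ => max_le hx.2 hy.2⟩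
  calc rivMeasure σ p _ ≤ ENNReal.ofReal (p t * (2 * ((c - t) * (R - c)))) :=
        rivMeasure_le_of_forall_straddle p hct hct.1.le hcR (fun xy hxy => hxy.1)
          fun xy hxy hbox => ⟨le_min hbox.1.1 hbox.2.1, hmax xy hxy hbox⟩
    _ ≤ _ := by
      refine ENNReal.ofReal_le_ofReal <| (le_div_iff₀ (by exact_mod_cast hk)).2 ?_
      rw [mul_right_comm]
      refine mul_two_mul_mul_le_of_edge (kt := kt) (by rw [hkt]; exact Nat.lt_floor_add_one _)
        (by linarith [hct.1]) (by linarith) (by linarith) ?_ fun hr => ?_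
      · have := two_mul_markedPoint_sub_mul t kt 2
        push_cast at this
        nlinarith
      · have := two_mul_markedPoint_sub_mul t kt (r + 2)
        have := hRm hr
        push_cast at *
        nlinarith

theorem rivMeasure_approvalEvent_le_of_markedPoint_le (hw : IsGreedyCommittee t kt Ct w)
    (hct : c ∈ Set.Ioo (t : ℝ) (t + 1)) (hc : c ∈ Ct)
    (hcW : c ∉ (Finset.Icc 2 (kt + 1)).image w) (hcm : markedPoint t kt (kt + 1) ≤ c)
    (hk : 0 < k) (hkt : kt = ⌊p t * k⌋₊) (j r : ℕ) :
    rivMeasure σ p (approvalEvent ((Finset.Icc 2 (kt + 1)).image w) c j r) ≤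
      ENNReal.ofReal ((j + 3 / 4) / k) := by
  obtain ⟨L, hLc, htL, hLm, hmin⟩ : ∃ L : ℝ, L ≤ c ∧ t ≤ L ∧
      (j < kt → 2 * markedPoint t kt (kt + 1 - j) - c ≤ L) ∧
      ∀ xy ∈ approvalEvent ((Finset.Icc 2 (kt + 1)).image w) c j r,
        xy ∈ Set.Icc (t : ℝ) (t + 1) ×ˢ Set.Icc (t : ℝ) (t + 1) → L ≤ min xy.1 xy.2 := by
    rcases lt_or_ge j kt with hj | hj
    · have hm : markedPoint t kt (kt + 1 - j) ≤ c := (markedPoint_mono (by omega)).trans hcm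
      exact ⟨max t (2 * markedPoint t kt (kt + 1 - j) - c), max_le hct.1.le (by linarith),
        le_max_left _ _, fun _ => le_max_right _ _, fun xy hxy ⟨hx, hy⟩ =>
          max_le (le_min hx.1 hy.1) (hw.lt_min_of_mem_approvalEvent hc hcW hcm hj hxy).le⟩
    · exact ⟨t, hct.1.le, le_rfl, fun h => absurd h hj.not_gt,
        fun xy _ ⟨hx, hy⟩ => le_min hx.1 hy.1⟩
  calc rivMeasure σ p _ ≤ ENNReal.ofReal (p t * (2 * ((c - L) * (t + 1 - c)))) :=
        rivMeasure_le_of_forall_straddle p hct hLc hct.2.le (fun xy hxy => hxy.1)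
          fun xy hxy hbox => ⟨hmin xy hxy hbox, max_le hbox.1.2 hbox.2.2⟩
    _ ≤ _ := by
      refine ENNReal.ofReal_le_ofReal <| (le_div_iff₀ (by exact_mod_cast hk)).2 ?_
      rw [mul_right_comm, mul_comm (c - L)]
      refine mul_two_mul_mul_le_of_edge (kt := kt) (by rw [hkt]; exact Nat.lt_floor_add_one _)
        (by linarith [hct.2]) (by linarith) (by linarith) ?_ fun hj => ?_
      · have := two_mul_markedPoint_sub_mul t kt (kt + 1)
        push_cast at this
        nlinarith
      · have := two_mul_markedPoint_sub_mul t kt (kt + 1 - j)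
        have := hLm hj
        rw [Nat.cast_sub (by omega)] at *
        push_cast at *
        nlinarith

end Edge

theorem riv_pi_bound_edge_general
    (σ : ℕ) (p : ℕ → ℝ)
    (t : ℕ)
    (Ct : Finset ℝ) (hCt : ∀ x ∈ Ct, x ∈ Set.Ioo (t : ℝ) (t + 1))
    (k : ℕ) (hk : 1 ≤ k)
    (kt : ℕ) (hktdef : kt = ⌊p t * (k : ℝ)⌋₊)
    (w : ℕ → ℝ) (hw : IsGreedyCommittee t kt Ct w)
    (W : Finset ℝ) (hW : W = (Finset.Icc 2 (kt + 1)).image w)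
    (c : ℝ) (hcCt : c ∈ Ct) (hcK : c ∉ segmentMiddle t kt Ct) (hcW : c ∉ W)
    (ℓ j : ℕ) (hℓ1 : 1 ≤ ℓ) (hj : j ≤ ℓ - 1) :
    rivMeasure σ p (approvalEvent W c j (ℓ - 1 - j)) ≤
      ENNReal.ofReal ((ℓ : ℝ) / k - 1 / (4 * k)) := by
  subst hW
  have hct := hCt c hcCt
  have hedge : c ≤ markedPoint t kt 2 ∨ markedPoint t kt (kt + 1) ≤ c := by
    by_contra! h
    rw [markedPoint_two, markedPoint_add_one] at h
    exact hcK (mem_filter.2 ⟨hcCt, h⟩)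
  have hbound : ∀ i : ℕ, i + 1 ≤ ℓ →
      ENNReal.ofReal ((i + 3 / 4) / k) ≤ ENNReal.ofReal ((ℓ : ℝ) / k - 1 / (4 * k)) := by
    intro i hi
    have : (i : ℝ) + 1 ≤ ℓ := by exact_mod_cast hi
    refine ENNReal.ofReal_le_ofReal ?_
    calc ((i : ℝ) + 3 / 4) / k ≤ (ℓ - 1 / 4) / k := by gcongr; linarith
      _ = ℓ / k - 1 / (4 * k) := by field_simp
  rcases hedge with hleft | hright
  · exact (rivMeasure_approvalEvent_le_of_le_markedPoint_two hw hct hcCt hcW hleft hk hktdef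
      j _).trans (hbound _ (by omega))
  · exact (rivMeasure_approvalEvent_le_of_markedPoint_le hw hct hcCt hcW hright hk hktdef
      j _).trans (hbound _ (by omega))

/-- For `k_t = ⌊p_t k⌋` and a candidate `c ∈ (C_t ∖ K_t) ∖ Ŵ_t`, integers `1 ≤ ℓ ≤ k`
and `0 ≤ j ≤ ℓ−1`, the probability `π(ℓ, c, j)` (that a random voter approves `c`, at
most `j` elements of `Ŵ_t` strictly to the left of `c`, and at most `ℓ−1−j` elements
strictly to the right of `c`) is at most `ℓ/k − 1/(4k)`. -/
theorem riv_pi_bound_edge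
    (σ : ℕ) (p : ℕ → ℝ)
    (hp0 : ∀ t ∈ Finset.Icc 1 σ, 0 ≤ p t)
    (hpsum : ∑ t ∈ Finset.Icc 1 σ, p t = 1)
    (t : ℕ) (ht : t ∈ Finset.Icc 1 σ)
    (Ct : Finset ℝ) (hCt : ∀ x ∈ Ct, x ∈ Set.Ioo (t : ℝ) (t + 1))
    (k : ℕ) (hk : 1 ≤ k)
    (kt : ℕ) (hktdef : kt = ⌊p t * (k : ℝ)⌋₊) (hkt : kt ≤ Ct.card)
    (w : ℕ → ℝ) (hw : IsGreedyCommittee t kt Ct w)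
    (W : Finset ℝ) (hW : W = (Finset.Icc 2 (kt + 1)).image w)
    (c : ℝ) (hcCt : c ∈ Ct) (hcK : c ∉ segmentMiddle t kt Ct) (hcW : c ∉ W)
    (ℓ j : ℕ) (hℓ1 : 1 ≤ ℓ) (hℓk : ℓ ≤ k) (hj : j ≤ ℓ - 1) :
    rivMeasure σ p (approvalEvent W c j (ℓ - 1 - j)) ≤
      ENNReal.ofReal ((ℓ : ℝ) / k - 1 / (4 * k)) :=
  riv_pi_bound_edge_general σ p t Ct hCt k hk kt hktdef w hw W hW c hcCt hcK hcW ℓ j hℓ1 hj
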